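/- arXiv:1507.07038 — 2 statements merged into one kernel-verified Lean document; each statement's English description precedes it below -/
import Mathlib

section
/- Let x be a nonempty string of length n over Σ, let g be the largest letter occurring in x, and let k be the number of occurrences of g in x. Then for every integer i with 0 ≤ i ≤ k, applying the star operation n − i times to x yields the string g^i consisting of i copies of g; in particular x^{n*} = ε, so the sequence x, x*, x^{2*}, … ends with g^k, …, g^2, g^1, g^0 = ε. -/
variable {α : Type*} [LinearOrder α]

/-- The star operation on strings: delete the letter `x_h`, where `h` is the
start of the longest non-decreasing suffix (so `h = 1` iff the whole string is
non-decreasing, and otherwise `x_{h-1} > x_h ≤ x_{h+1} ≤ ⋯ ≤ x_n`). -/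
def vstar : List α → List α
  | [] => []
  | a :: t => if List.IsChain (· ≤ ·) (a :: t) then t else a :: vstar t

/-- V-order `≺` between distinct strings `x`, `y`: either `x` lies on the path
`y, y*, y^{2*}, …, ε`, or (if neither lies on the path of the other) taking the
least `s, t` with `x^{(s+1)*} = y^{(t+1)*}` and the greatest position `j` at
which `s = x^{s*}` and `t = y^{t*}` differ, the letter of `x^{s*}` at `j` is
smaller than that of `y^{t*}`. -/
def VLess (x y : List α) : Prop :=
  (∃ k : ℕ, 0 < k ∧ vstar^[k] y = x) ∨
  ((¬ ∃ k : ℕ, vstar^[k] y = x) ∧ (¬ ∃ k : ℕ, vstar^[k] x = y) ∧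
    ∃ s t : ℕ,
      vstar^[s + 1] x = vstar^[t + 1] y ∧
      (∀ s' t' : ℕ, vstar^[s' + 1] x = vstar^[t' + 1] y → s ≤ s' ∧ t ≤ t') ∧
      ∃ j : ℕ, j < (vstar^[s] x).length ∧
        (∀ j' : ℕ, j < j' → (vstar^[s] x)[j']? = (vstar^[t] y)[j']?) ∧
        ∃ a b : α, (vstar^[s] x)[j]? = some a ∧ (vstar^[t] y)[j]? = some b ∧
          a < b)

/-! While `x` has a letter below its maximum `g`, the letter deleted by `*` is below `g`: it is
either the first (least) letter of a non-decreasing string containing such a letter, or smaller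
than its predecessor. So `x^{s*}` keeps all `k` copies of `g` and loses one other letter per step
until, after `|x| - k` steps, only `g^k` is left; on `g^m` the operation deletes one `g`. -/

theorem vstar_sublist (x : List α) : (vstar x).Sublist x := by
  induction x with
  | nil => simp [vstar]
  | cons a t ih =>
    rw [vstar]
    split
    · exact List.sublist_cons_self a t
    · exact ih.cons_cons a

theorem length_vstar (x : List α) : (vstar x).length = x.length - 1 := by
  induction x with
  | nil => rfl
  | cons a t ih =>
    rw [vstar]
    split_ifs with hchain
    · simp
    · have ht : t ≠ [] := by
        rintro rfl
        exact hchain (List.isChain_singleton a)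
      have := List.length_pos_iff.mpr ht
      simp only [List.length_cons, ih]
      omega

theorem vstar_replicate (n : ℕ) (g : α) :
    vstar (List.replicate n g) = List.replicate (n - 1) g := by
  cases n with
  | zero => rfl
  | succ n =>
    have hchain : List.IsChain (· ≤ ·) (g :: List.replicate n g) :=
      List.isChain_replicate_of_rel (n + 1) le_rfl
    rw [List.replicate_succ, vstar, if_pos hchain]
    rfl

theorem vstar_iterate_replicate (m n : ℕ) (g : α) :
    vstar^[m] (List.replicate n g) = List.replicate (n - m) g := by
  induction m with
  | zero => rfl
  | succ m ih => rw [Function.iterate_succ_apply', ih, vstar_replicate, Nat.sub_sub]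

theorem count_vstar_of_exists_lt {x : List α} {g : α} (hle : ∀ a ∈ x, a ≤ g)
    (hlt : ∃ a ∈ x, a < g) : (vstar x).count g = x.count g := by
  induction x with
  | nil => simp at hlt
  | cons a t ih =>
    have hle_t : ∀ b ∈ t, b ≤ g := fun b hb => hle b (List.mem_cons_of_mem a hb)
    rw [vstar]
    split_ifs with hchain
    · obtain ⟨b, hb, hbg⟩ := hlt
      have hab : a ≤ b := by
        rcases List.mem_cons.mp hb with rfl | hbt
        · exact le_rfl
        · exact (List.pairwise_cons.mp (List.isChain_iff_pairwise.mp hchain)).1 b hbt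
      rw [List.count_cons_of_ne (hab.trans_lt hbg).ne]
    · have hlt_t : ∃ b ∈ t, b < g := by
        by_contra! hge
        have heq : ∀ b ∈ t, b = g := fun b hb => le_antisymm (hle_t b hb) (hge b hb)
        refine hchain (List.isChain_iff_pairwise.mpr (List.pairwise_cons.mpr ⟨?_, ?_⟩))
        · exact fun b hb => heq b hb ▸ hle a List.mem_cons_self
        · exact List.pairwise_of_forall_mem_list fun b hb c hc =>
            ((heq b hb).trans (heq c hc).symm).le
      simp only [List.count_cons, ih hle_t hlt_t]

theorem vstar_iterate_length_sub_count {x : List α} {g : α} (hle : ∀ a ∈ x, a ≤ g) :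
    vstar^[x.length - x.count g] x = List.replicate (x.count g) g := by
  induction hn : x.length - x.count g generalizing x with
  | zero =>
    have hcount : x.count g = x.length := le_antisymm List.count_le_length (by omega)
    rw [Function.iterate_zero_apply, List.eq_replicate_iff]
    exact ⟨hcount.symm, fun b hb => (List.count_eq_length.mp hcount b hb).symm⟩
  | succ n ih =>
    have hlt : ∃ a ∈ x, a < g := by
      by_contra! hge
      have hcount : x.count g = x.length :=
        List.count_eq_length.mpr fun b hb => le_antisymm (hge b hb) (hle b hb)
      omega
    have hcount := count_vstar_of_exists_lt hle hlt
    have hpos : 0 < x.length := by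
      obtain ⟨a, ha, -⟩ := hlt
      exact List.length_pos_of_mem ha
    rw [Function.iterate_succ_apply, ← hcount]
    exact ih (fun a ha => hle a ((vstar_sublist x).mem ha)) (by rw [length_vstar]; omega)

theorem vstar_iterate_ends_with_powers_of_max_general {α : Type*} [LinearOrder α]
    (x : List α) (g : α) (k : ℕ)
    (hmax : ∀ a ∈ x, a ≤ g)
    (hk : k = x.count g) :
    (∀ i : ℕ, i ≤ k → vstar^[x.length - i] x = List.replicate i g) ∧
    vstar^[x.length] x = [] := by
  have hpath : ∀ i : ℕ, i ≤ k → vstar^[x.length - i] x = List.replicate i g := by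
    intro i hi
    have hsplit : x.length - i = (k - i) + (x.length - k) := by
      have := x.count_le_length (a := g)
      omega
    rw [hsplit, Function.iterate_add_apply, hk, vstar_iterate_length_sub_count hmax,
      vstar_iterate_replicate, Nat.sub_sub_self (hk ▸ hi)]
  exact ⟨hpath, by simpa using hpath 0 (Nat.zero_le k)⟩

/-- For a nonempty string `x` of length `n` with largest letter `g` occurring
`k` times, applying the star operation `n - i` times yields `g^i` for every
`0 ≤ i ≤ k`; in particular `x^{n*} = ε`, so the star path of `x` ends with
`g^k, …, g², g¹, g⁰ = ε`. -/
theorem vstar_iterate_ends_with_powers_of_max {α : Type*} [LinearOrder α]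
    (x : List α) (g : α) (k : ℕ)
    (hne : x ≠ []) (hmem : g ∈ x) (hmax : ∀ a ∈ x, a ≤ g)
    (hk : k = x.count g) :
    (∀ i : ℕ, i ≤ k → vstar^[x.length - i] x = List.replicate i g) ∧
    vstar^[x.length] x = [] :=
  vstar_iterate_ends_with_powers_of_max_general x g k hmax hk
end

section
/- For any strings v and x over Σ, if v is a proper subsequence of x (that is, v is obtained from x by deleting at least one letter), then v ≺ x in V-order. -/
variable {α : Type*} [LinearOrder α]

/-!
Write `u ≺ w` for V-order between strings of equal length, unfolded into the recursion
`u ≺ w ↔ (u* = w* ∧ u <colex w) ∨ u* ≺ w*`, where `<colex` compares the last letter at which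
the strings differ. Appending a letter acts on the star by `(y a)* = y* a` if the last letter
of `y` is `≤ a`, and `(y a)* = y` otherwise. Hence `≺` is transitive and compatible with
appending a letter on the right, `y ≼ y* a` in the first case (`y` is pointwise below `y* a`)
and `y* a ≺ y` in the second. A snoc induction on `x` then shows that deleting any single
letter of `x` gives a string `≼ x*`; iterating, a subsequence `v` of `x` satisfies
`v ≼ x^{d*}` with `d = |x| - |v|`. Either `v` lies on the star path of `x`, or the two paths
merge and the colex comparison one level before they merge is the second clause of V-order.
-/

section Colex

variable {β : Type*}

def ColexLt [LT β] (S T : List β) : Prop :=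
  ∃ j : ℕ, (∀ j' : ℕ, j < j' → S[j']? = T[j']?) ∧
    ∃ a b : β, S[j]? = some a ∧ T[j]? = some b ∧ a < b

theorem ColexLt.ne [Preorder β] {S T : List β} (h : ColexLt S T) : S ≠ T := by
  rintro rfl
  obtain ⟨j, -, a, b, ha, hb, hab⟩ := h
  obtain rfl : a = b := Option.some_injective _ (ha.symm.trans hb)
  exact lt_irrefl a hab

theorem ColexLt.length_eq [LT β] {S T : List β} (h : ColexLt S T) :
    S.length = T.length := by
  obtain ⟨j, hbeyond, a, b, ha, hb, -⟩ := h
  have hjS := (List.getElem?_eq_some_iff.mp ha).1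
  have hjT := (List.getElem?_eq_some_iff.mp hb).1
  by_contra hne
  rcases Nat.lt_or_gt_of_ne hne with hlt | hlt
  · have := hbeyond (T.length - 1) (by omega)
    rw [List.getElem?_eq_none (by omega), List.getElem?_eq_getElem (by omega)] at this
    simp at this
  · have := hbeyond (S.length - 1) (by omega)
    rw [List.getElem?_eq_none (l := T) (by omega), List.getElem?_eq_getElem (by omega)] at this
    simp at this

theorem ColexLt.trans [Preorder β] {S T U : List β} (h₁ : ColexLt S T) (h₂ : ColexLt T U) :
    ColexLt S U := by
  obtain ⟨j₁, hb₁, a₁, b₁, ha₁, hb₁', hab₁⟩ := h₁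
  obtain ⟨j₂, hb₂, a₂, b₂, ha₂, hb₂', hab₂⟩ := h₂
  rcases lt_trichotomy j₁ j₂ with h | rfl | h
  · exact ⟨j₂, fun j' hj' => (hb₁ j' (h.trans hj')).trans (hb₂ j' hj'), a₂, b₂,
      (hb₁ j₂ h).trans ha₂, hb₂', hab₂⟩
  · obtain rfl : b₁ = a₂ := Option.some_injective _ (hb₁'.symm.trans ha₂)
    exact ⟨j₁, fun j' hj' => (hb₁ j' hj').trans (hb₂ j' hj'), a₁, b₂, ha₁, hb₂',
      hab₁.trans hab₂⟩
  · exact ⟨j₁, fun j' hj' => (hb₁ j' hj').trans (hb₂ j' (h.trans hj')), a₁, b₁,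
      ha₁, (hb₂ j₁ h).symm.trans hb₁', hab₁⟩

theorem ColexLt.append_singleton [LT β] {S T : List β} (h : ColexLt S T) (c : β) :
    ColexLt (S ++ [c]) (T ++ [c]) := by
  have hlen := h.length_eq
  obtain ⟨j, hbeyond, a, b, ha, hb, hab⟩ := h
  have hjS := (List.getElem?_eq_some_iff.mp ha).1
  refine ⟨j, fun j' hj' => ?_, a, b, ?_, ?_, hab⟩
  · rcases Nat.lt_or_ge j' S.length with hlt | hge
    · rw [List.getElem?_append_left hlt, List.getElem?_append_left (hlen ▸ hlt)]
      exact hbeyond j' hj'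
    · rw [List.getElem?_append_right hge, List.getElem?_append_right (hlen ▸ hge), hlen]
  · rwa [List.getElem?_append_left hjS]
  · rwa [List.getElem?_append_left (hlen ▸ hjS)]

theorem colexLt_concat [LT β] {S T : List β} (hlen : S.length = T.length) {a b : β}
    (hab : a < b) : ColexLt (S ++ [a]) (T ++ [b]) := by
  refine ⟨S.length, fun j' hj' => ?_, a, b, List.getElem?_concat_length,
    hlen ▸ List.getElem?_concat_length, hab⟩
  rw [List.getElem?_eq_none (by simp; omega), List.getElem?_eq_none (by simp; omega)]

theorem ColexLt.cons [LT β] {S T : List β} (h : ColexLt S T) (a b : β) :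
    ColexLt (a :: S) (b :: T) := by
  obtain ⟨j, hbeyond, x, y, hx, hy, hxy⟩ := h
  refine ⟨j + 1, fun j' hj' => ?_, x, y, hx, hy, hxy⟩
  obtain ⟨j', rfl⟩ := Nat.exists_eq_add_of_lt hj'
  exact hbeyond _ (by omega)

theorem colexLt_cons_of_lt [LT β] {a b : β} (hab : a < b) (S : List β) :
    ColexLt (a :: S) (b :: S) := by
  refine ⟨0, fun j' hj' => ?_, a, b, rfl, rfl, hab⟩
  obtain ⟨j', rfl⟩ := Nat.exists_eq_add_of_lt hj'
  rfl

theorem colexLt_of_forall₂ [PartialOrder β] {S T : List β} (h : List.Forall₂ (· ≤ ·) S T)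
    (hne : S ≠ T) : ColexLt S T := by
  induction h with
  | nil => exact absurd rfl hne
  | @cons a b S T hab _ ih =>
    by_cases hST : S = T
    · subst hST
      exact colexLt_cons_of_lt (lt_of_le_of_ne hab fun h => hne (h ▸ rfl)) S
    · exact (ih hST).cons a b

end Colex

theorem List.Sublist.exists_sublist_eraseIdx {β : Type*} {v x : List β} (h : v.Sublist x)
    (hne : v ≠ x) : ∃ i < x.length, v.Sublist (x.eraseIdx i) := by
  induction h with
  | slnil => exact absurd rfl hne
  | cons a h => exact ⟨0, by simp, h⟩
  | cons_cons a _ ih =>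
    obtain ⟨i, hi, hsub⟩ := ih fun h => hne (h ▸ rfl)
    exact ⟨i + 1, by simpa using hi, hsub.cons_cons a⟩

theorem iterate_eq_iterate_of_le {β : Type*} {f : β → β} {S T : β} {m n : ℕ}
    (h : f^[m] S = f^[m] T) (hmn : m ≤ n) : f^[n] S = f^[n] T := by
  obtain ⟨k, rfl⟩ := Nat.exists_eq_add_of_le hmn
  rw [Nat.add_comm, Function.iterate_add_apply, Function.iterate_add_apply, h]

theorem length_iterate_vstar (k : ℕ) (x : List α) : (vstar^[k] x).length = x.length - k := by
  induction k with
  | zero => rfl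
  | succ k ih => rw [Function.iterate_succ_apply', length_vstar, ih]; omega

theorem vstar_append_singleton (y : List α) (a : α) :
    vstar (y ++ [a]) = if ∃ b ∈ y.getLast?, b ≤ a then vstar y ++ [a] else y := by
  induction y with
  | nil => simp [vstar]
  | cons c t ih =>
    have hchain : List.IsChain (· ≤ ·) (c :: (t ++ [a])) ↔
        List.IsChain (· ≤ ·) (c :: t) ∧ ∃ b ∈ (c :: t).getLast?, b ≤ a := by
      rw [← List.cons_append, List.isChain_append, List.getLast?_cons]
      simp
    cases t with
    | nil => by_cases hca : c ≤ a <;> simp [vstar, hca]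
    | cons d t =>
      rw [List.cons_append, vstar.eq_2]
      by_cases hc : List.IsChain (· ≤ ·) (c :: d :: t)
      · have hv : vstar (c :: d :: t) = d :: t := by rw [vstar.eq_2, if_pos hc]
        by_cases hca : ∃ b ∈ (c :: d :: t).getLast?, b ≤ a
        · rw [if_pos (hchain.2 ⟨hc, hca⟩), if_pos hca, hv]
        · rw [if_neg (fun h => hca (hchain.1 h).2), if_neg hca, ih,
            if_neg (by simpa only [List.getLast?_cons_cons] using hca)]
      · rw [if_neg (fun h => hc (hchain.1 h).1), ih, vstar.eq_2 c, if_neg hc,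
          List.getLast?_cons_cons]
        split_ifs <;> rfl

theorem vstar_append_singleton_of_le {y : List α} {a : α} (h : ∃ b ∈ y.getLast?, b ≤ a) :
    vstar (y ++ [a]) = vstar y ++ [a] := by
  rw [vstar_append_singleton, if_pos h]

theorem vstar_append_singleton_of_lt {y : List α} {a : α} (h : ∀ b ∈ y.getLast?, a < b) :
    vstar (y ++ [a]) = y := by
  rw [vstar_append_singleton, if_neg]
  simpa using h

theorem le_of_mem_getLast?_vstar {x : List α} {b c : α} (hb : b ∈ x.getLast?)
    (hc : c ∈ (vstar x).getLast?) : b ≤ c := by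
  obtain ⟨y, rfl⟩ := List.getLast?_eq_some_iff.mp hb
  by_cases hy : ∃ b' ∈ y.getLast?, b' ≤ b
  · rw [vstar_append_singleton_of_le hy] at hc
    simp_all
  · push Not at hy
    rw [vstar_append_singleton_of_lt hy] at hc
    exact (hy c hc).le

theorem forall₂_le_vstar_append_singleton {u : List α} {a : α} (h : ∃ b ∈ u.getLast?, b ≤ a) :
    List.Forall₂ (· ≤ ·) u (vstar u ++ [a]) := by
  induction u using List.reverseRecOn generalizing a with
  | nil => simp at h
  | append_singleton y b ih =>
    have hba : b ≤ a := by simpa using h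
    by_cases hy : ∃ c ∈ y.getLast?, c ≤ b
    · rw [vstar_append_singleton_of_le hy]
      exact List.rel_append (ih hy) (.cons hba .nil)
    · push Not at hy
      rw [vstar_append_singleton_of_lt hy]
      exact List.rel_append (List.forall₂_refl y) (.cons hba .nil)

/-- V-order on strings of equal length, by recursion on the level at which their star paths
merge. -/
inductive VLt : List α → List α → Prop
  | of_colexLt {S T : List α} : vstar S = vstar T → ColexLt S T → VLt S T
  | of_vstar {S T : List α} : VLt (vstar S) (vstar T) → VLt S T

def VLe (S T : List α) : Prop := S = T ∨ VLt S T

namespace VLt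

variable {S T U : List α}

theorem ne (h : VLt S T) : S ≠ T := by
  induction h with
  | of_colexLt _ h => exact h.ne
  | of_vstar _ ih => rintro rfl; exact ih rfl

theorem right_ne_nil (h : VLt S T) : T ≠ [] := by
  induction h with
  | of_colexLt _ h =>
    obtain ⟨j, -, -, b, -, hb, -⟩ := h
    rintro rfl
    simp at hb
  | of_vstar _ ih => rintro rfl; exact ih rfl

theorem trans (h₁ : VLt S T) (h₂ : VLt T U) : VLt S U := by
  induction h₁ generalizing U with
  | of_colexLt hs₁ hc₁ =>
    cases h₂ with
    | of_colexLt hs₂ hc₂ => exact of_colexLt (hs₁.trans hs₂) (hc₁.trans hc₂)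
    | of_vstar h₂ => exact of_vstar (hs₁ ▸ h₂)
  | of_vstar h₁ ih =>
    cases h₂ with
    | of_colexLt hs₂ _ => exact of_vstar (hs₂ ▸ h₁)
    | of_vstar h₂ => exact of_vstar (ih h₂)

theorem vle (h : VLt S T) : VLe S T := Or.inr h

theorem trans_vle (h₁ : VLt S T) (h₂ : VLe T U) : VLt S U := by
  rcases h₂ with rfl | h₂
  exacts [h₁, h₁.trans h₂]

theorem vle_vstar (h : VLt S T) : VLe (vstar S) (vstar T) := by
  cases h with
  | of_colexLt hs _ => exact Or.inl hs
  | of_vstar h => exact h.vle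

theorem exists_iterate (h : VLt S T) :
    ∃ k, vstar^[k + 1] S = vstar^[k + 1] T ∧ ColexLt (vstar^[k] S) (vstar^[k] T) := by
  induction h with
  | of_colexLt hs hc => exact ⟨0, hs, hc⟩
  | of_vstar _ ih =>
    obtain ⟨k, hs, hc⟩ := ih
    exact ⟨k + 1, hs, hc⟩

end VLt

namespace VLe

variable {S T U : List α}

@[refl] theorem refl (S : List α) : VLe S S := Or.inl rfl

theorem trans_vlt (h₁ : VLe S T) (h₂ : VLt T U) : VLt S U := by
  rcases h₁ with rfl | h₁
  exacts [h₂, h₁.trans h₂]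

theorem trans (h₁ : VLe S T) (h₂ : VLe T U) : VLe S U := by
  rcases h₂ with rfl | h₂
  exacts [h₁, (h₁.trans_vlt h₂).vle]

theorem vle_vstar (h : VLe S T) : VLe (vstar S) (vstar T) := by
  rcases h with rfl | h
  exacts [refl _, h.vle_vstar]

theorem vle_iterate (h : VLe S T) (n : ℕ) : VLe (vstar^[n] S) (vstar^[n] T) := by
  induction n with
  | zero => exact h
  | succ n ih => simpa only [Function.iterate_succ_apply'] using ih.vle_vstar

end VLe

theorem VLt.of_vle_vstar {S T : List α} (hs : VLe (vstar S) (vstar T)) (hc : ColexLt S T) :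
    VLt S T := by
  rcases hs with hs | hs
  exacts [.of_colexLt hs hc, .of_vstar hs]

theorem vle_vstar_append_singleton {u : List α} {a : α} (h : ∃ b ∈ u.getLast?, b ≤ a) :
    VLe u (vstar u ++ [a]) := by
  by_cases heq : u = vstar u ++ [a]
  · exact Or.inl heq
  refine (VLt.of_vle_vstar ?_ (colexLt_of_forall₂ (forall₂_le_vstar_append_singleton h) heq)).vle
  by_cases hu : ∃ c ∈ (vstar u).getLast?, c ≤ a
  · rw [vstar_append_singleton_of_le hu]
    exact vle_vstar_append_singleton hu
  · push Not at hu
    rw [vstar_append_singleton_of_lt hu]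
termination_by u.length
decreasing_by
  obtain ⟨b, hb, -⟩ := h
  have : 0 < u.length := List.length_pos_iff.mpr (by rintro rfl; simp at hb)
  rw [length_vstar]
  omega

theorem vstar_append_singleton_vlt {z : List α} {a : α} (hz : z ≠ [])
    (h : ∀ b ∈ z.getLast?, a < b) : VLt (vstar z ++ [a]) z := by
  obtain ⟨y, b, rfl⟩ := (List.eq_nil_or_concat' z).resolve_left hz
  have hab : a < b := h b (by simp)
  refine .of_colexLt (vstar_append_singleton_of_lt fun c hc => ?_) (colexLt_concat ?_ hab)
  · exact hab.trans_le (le_of_mem_getLast?_vstar (by simp) hc)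
  · simp [length_vstar]

/-- `hstar` is what either constructor of `VLt S T` provides once `a` is appended one level
down. -/
theorem VLt.append_singleton_of_vstar {S T : List α} {a : α} (h : VLt S T)
    (hstar : (vstar S = vstar T ∧ ColexLt S T) ∨ VLt (vstar S ++ [a]) (vstar T ++ [a])) :
    VLt (S ++ [a]) (T ++ [a]) := by
  have hle : VLe (vstar S ++ [a]) (vstar T ++ [a]) := hstar.imp (fun h => by rw [h.1]) id
  by_cases hS : ∃ b ∈ S.getLast?, b ≤ a <;> by_cases hT : ∃ b ∈ T.getLast?, b ≤ a
  · rcases hstar with ⟨hs, hc⟩ | hv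
    · refine .of_colexLt ?_ (hc.append_singleton a)
      rw [vstar_append_singleton_of_le hS, vstar_append_singleton_of_le hT, hs]
    · refine .of_vstar ?_
      rwa [vstar_append_singleton_of_le hS, vstar_append_singleton_of_le hT]
  · push Not at hT
    refine .of_vstar ?_
    rw [vstar_append_singleton_of_le hS, vstar_append_singleton_of_lt hT]
    exact hle.trans_vlt (vstar_append_singleton_vlt h.right_ne_nil hT)
  · push Not at hS
    refine .of_vstar ?_
    rw [vstar_append_singleton_of_lt hS, vstar_append_singleton_of_le hT]
    exact h.trans_vle (vle_vstar_append_singleton hT)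
  · push Not at hS hT
    refine .of_vstar ?_
    rwa [vstar_append_singleton_of_lt hS, vstar_append_singleton_of_lt hT]

theorem VLt.append_singleton {S T : List α} (h : VLt S T) (a : α) :
    VLt (S ++ [a]) (T ++ [a]) := by
  induction h with
  | of_colexLt hs hc => exact (of_colexLt hs hc).append_singleton_of_vstar (Or.inl ⟨hs, hc⟩)
  | of_vstar h ih => exact (of_vstar h).append_singleton_of_vstar (Or.inr ih)

theorem VLe.append_singleton {S T : List α} (h : VLe S T) (a : α) :
    VLe (S ++ [a]) (T ++ [a]) :=
  h.imp (congrArg (· ++ [a])) (·.append_singleton a)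

theorem vle_eraseIdx_vstar (x : List α) {i : ℕ} (hi : i < x.length) :
    VLe (x.eraseIdx i) (vstar x) := by
  induction x using List.reverseRecOn generalizing i with
  | nil => simp at hi
  | append_singleton y a ih =>
    rcases Nat.lt_or_ge i y.length with hiy | hiy
    · rw [List.eraseIdx_append_of_lt_length hiy]
      by_cases hy : ∃ b ∈ y.getLast?, b ≤ a
      · rw [vstar_append_singleton_of_le hy]
        exact (ih hiy).append_singleton a
      · push Not at hy
        rw [vstar_append_singleton_of_lt hy]
        have hy' : y ≠ [] := List.ne_nil_of_length_pos (by omega)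
        exact ((ih hiy).append_singleton a).trans_vlt (vstar_append_singleton_vlt hy' hy) |>.vle
    · obtain rfl : i = y.length := by simp at hi; omega
      rw [List.eraseIdx_append_of_length_le le_rfl, Nat.sub_self, List.eraseIdx_cons_zero,
        List.append_nil]
      by_cases hy : ∃ b ∈ y.getLast?, b ≤ a
      · rw [vstar_append_singleton_of_le hy]
        exact vle_vstar_append_singleton hy
      · push Not at hy
        rw [vstar_append_singleton_of_lt hy]

theorem vle_iterate_vstar_of_sublist {v x : List α} (h : v.Sublist x) :
    VLe v (vstar^[x.length - v.length] x) := by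
  by_cases hvx : v = x
  · subst hvx
    simpa using VLe.refl v
  obtain ⟨i, hi, hsub⟩ := h.exists_sublist_eraseIdx hvx
  have hlen : (x.eraseIdx i).length + 1 = x.length := by
    rw [List.length_eraseIdx_of_lt hi]; omega
  have hd : x.length - v.length = ((x.eraseIdx i).length - v.length) + 1 := by
    have := hsub.length_le; omega
  rw [hd, Function.iterate_succ_apply]
  exact (vle_iterate_vstar_of_sublist hsub).trans ((vle_eraseIdx_vstar x hi).vle_iterate _)
termination_by x.length
decreasing_by
  rw [List.length_eraseIdx_of_lt hi]; omega

theorem VLt.not_exists_iterate_vstar_eq {v x : List α} {d : ℕ}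
    (hlen : v.length + d = x.length) (h : VLt v (vstar^[d] x)) :
    (¬ ∃ k, vstar^[k] x = v) ∧ ¬ ∃ k, vstar^[k] v = x := by
  have hpos : 0 < v.length := by
    have := List.length_pos_iff.mpr h.right_ne_nil
    rw [length_iterate_vstar] at this
    omega
  constructor
  · rintro ⟨m, hm⟩
    have := congrArg List.length hm
    rw [length_iterate_vstar] at this
    obtain rfl : m = d := by omega
    exact h.ne hm.symm
  · rintro ⟨m, hm⟩
    have := congrArg List.length hm
    rw [length_iterate_vstar] at this
    obtain ⟨rfl, rfl⟩ : m = 0 ∧ d = 0 := by omega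
    exact h.ne hm

theorem vless_of_vlt_iterate {v x : List α} {d : ℕ} (hlen : v.length + d = x.length)
    (h : VLt v (vstar^[d] x)) : VLess v x := by
  obtain ⟨hx, hv⟩ := h.not_exists_iterate_vstar_eq hlen
  obtain ⟨k, hmerge, hlt⟩ := h.exists_iterate
  have hiter (m : ℕ) : vstar^[m + d] x = vstar^[m] (vstar^[d] x) :=
    Function.iterate_add_apply _ _ _ _
  have hk : k < v.length := by
    obtain ⟨j, -, a, -, ha, -⟩ := hlt
    have := (List.getElem?_eq_some_iff.mp ha).1
    rw [length_iterate_vstar] at this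
    omega
  have hmin (m : ℕ) (hm : vstar^[m] v = vstar^[m + d] x) : k < m := by
    by_contra hkm
    exact hlt.ne (iterate_eq_iterate_of_le (hm.trans (hiter m)) (not_lt.mp hkm))
  refine Or.inr ⟨hx, hv, k, k + d, ?_, fun s t hst => ?_, ?_⟩
  · rw [show k + d + 1 = k + 1 + d by omega, hiter]
    exact hmerge
  · have := congrArg List.length hst
    rw [length_iterate_vstar, length_iterate_vstar] at this
    by_cases hs : s + 1 < v.length
    · obtain rfl : t = s + d := by omega
      have := hmin (s + 1) (by rwa [show s + d + 1 = s + 1 + d by omega] at hst)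
      omega
    · omega
  · rw [hiter]
    obtain ⟨j, hj, a, b, ha, hb, hab⟩ := hlt
    exact ⟨j, (List.getElem?_eq_some_iff.mp ha).1, hj, a, b, ha, hb, hab⟩

/-- If `v` is a proper subsequence of `x` (obtained from `x` by deleting at
least one letter), then `v ≺ x` in V-order. -/
theorem vless_of_proper_sublist {α : Type*} [LinearOrder α]
    (v x : List α) (hsub : v.Sublist x) (hne : v ≠ x) :
    VLess v x := by
  have hlen : v.length < x.length :=
    lt_of_le_of_ne hsub.length_le fun h => hne (hsub.eq_of_length h)
  rcases vle_iterate_vstar_of_sublist hsub with heq | hlt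
  · exact Or.inl ⟨x.length - v.length, by omega, heq.symm⟩
  · exact vless_of_vlt_iterate (by omega) hlt
end
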